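/- arXiv:1706.03049 — 2 statements merged into one kernel-verified Lean document; each statement's English description precedes it below -/
import Mathlib

section
/- Let P be a convex polygon and for each unit vector u let b(u), c(u) be the base vertices of the (unique) triangle anchored to u. Then b and c are continuous functions from S¹ to ∂P. -/
/-!
Write `s x = dotp x u` and `t x = wedge u x` for the coordinates along a unit vector `u` and
across it. A triangle inscribed with outer normal `u` to `bc` has area
`(s b - s a) (t c - t b) / 2`.
For an anchored triangle the apex minimises `s` on `P`, and `b`, `c` are the extreme points of `P`
on the line `s = s b`. Two anchored triangles thus have their apexes on the same level, and an
apex together with the midpoints of the two bases is an inscribed triangle which, by AM-GM, beats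
the maximal area unless both bases lie on the same line; extremality then forces equal bases.

For continuity, along an ultrafilter converging to `u` the anchored triangles converge (`P` is
compact) to an inscribed triangle for `u`. Rotating an anchored triangle for `u` about an interior
point `z` and shrinking it by `k < 1` yields inscribed triangles for all nearby normals, so the
limit has area at least `k²` times the maximum for every `k < 1`; it is therefore anchored, and
uniqueness identifies its base with `(B u, C u)`.
-/

noncomputable section
open Set Real

/-- Points in the plane. -/
abbrev Pt : Type := ℝ × ℝ

/-- 2D wedge (cross) product. -/
def wedge (p q : Pt) : ℝ := p.1 * q.2 - p.2 * q.1

/-- Euclidean dot product on the plane. -/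
def dotp (p q : Pt) : ℝ := p.1 * q.1 + p.2 * q.2

/-- Area of the triangle with vertices `a b c`. -/
def triArea (a b c : Pt) : ℝ := |wedge (b - a) (c - a)| / 2

/-- `abc` is inscribed in `P`, counter-clockwise, with `u` an outer normal to the side `bc`. -/
def InscribedNormal (P : Set Pt) (u a b c : Pt) : Prop :=
  a ∈ P ∧ b ∈ P ∧ c ∈ P ∧ 0 ≤ wedge (b - a) (c - a) ∧
    dotp (c - b) u = 0 ∧ dotp a u ≤ dotp b u

/-- `abc` is anchored to `u` in `P`: it maximizes area among inscribed triangles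
with `u` as outer normal to the side `bc`. -/
def Anchored (P : Set Pt) (u a b c : Pt) : Prop :=
  InscribedNormal P u a b c ∧
    ∀ a' b' c' : Pt, InscribedNormal P u a' b' c' → triArea a' b' c' ≤ triArea a b c


open Filter Topology

theorem affineSpan_eq_top_of_not_collinear {k V : Type*} [DivisionRing k] [AddCommGroup V]
    [Module k V] [FiniteDimensional k V] (hV : Module.finrank k V = 2) {s : Set V}
    (hs : ¬ Collinear k s) : affineSpan k s = ⊤ := by
  rcases s.eq_empty_or_nonempty with rfl | hne
  · exact absurd (collinear_empty k V) hs
  rw [← AffineSubspace.direction_eq_top_iff_of_nonempty ((affineSpan_nonempty k).2 hne),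
    direction_affineSpan]
  by_contra h
  apply hs
  rw [collinear_iff_finrank_le_one]
  have := Submodule.finrank_lt h
  omega

lemma dotp_sub (x y w : Pt) : dotp (x - y) w = dotp x w - dotp y w := by
  simp only [dotp, Prod.fst_sub, Prod.snd_sub]; ring

lemma dotp_smul (k : ℝ) (x w : Pt) : dotp (k • x) w = k * dotp x w := by
  simp only [dotp, Prod.smul_fst, Prod.smul_snd, smul_eq_mul]; ring

lemma dotp_smul_add_smul (s t : ℝ) (x y w : Pt) :
    dotp (s • x + t • y) w = s * dotp x w + t * dotp y w := by
  simp only [dotp, Prod.fst_add, Prod.snd_add, Prod.smul_fst, Prod.smul_snd, smul_eq_mul]; ring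

lemma wedge_smul_smul (k : ℝ) (x y : Pt) : wedge (k • x) (k • y) = k ^ 2 * wedge x y := by
  simp only [wedge, Prod.smul_fst, Prod.smul_snd, smul_eq_mul]; ring

lemma wedge_smul_add_smul (s t : ℝ) (w x y : Pt) :
    wedge w (s • x + t • y) = s * wedge w x + t * wedge w y := by
  simp only [wedge, Prod.fst_add, Prod.snd_add, Prod.smul_fst, Prod.smul_snd, smul_eq_mul]; ring

section Continuity

variable {α : Type*} [TopologicalSpace α] {f g h : α → Pt}

@[fun_prop]
lemma Continuous.dotp (hf : Continuous f) (hg : Continuous g) :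
    Continuous fun x => dotp (f x) (g x) := by
  unfold _root_.dotp; fun_prop

@[fun_prop]
lemma Continuous.wedge (hf : Continuous f) (hg : Continuous g) :
    Continuous fun x => wedge (f x) (g x) := by
  unfold _root_.wedge; fun_prop

@[fun_prop]
lemma Continuous.triArea (hf : Continuous f) (hg : Continuous g) (hh : Continuous h) :
    Continuous fun x => triArea (f x) (g x) (h x) := by
  unfold _root_.triArea; fun_prop

end Continuity

section Frame

variable {u : Pt}

lemma eq_of_dotp_eq_of_wedge_eq (hu : u.1 ^ 2 + u.2 ^ 2 = 1) {x y : Pt}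
    (hs : dotp x u = dotp y u) (ht : wedge u x = wedge u y) : x = y := by
  simp only [dotp, wedge] at hs ht
  ext
  · linear_combination u.1 * hs - u.2 * ht + (y.1 - x.1) * hu
  · linear_combination u.2 * hs + u.1 * ht + (y.2 - x.2) * hu

lemma wedge_sub_sub_eq (hu : u.1 ^ 2 + u.2 ^ 2 = 1) {a b c : Pt} (hbc : dotp c u = dotp b u) :
    wedge (b - a) (c - a) = (dotp b u - dotp a u) * (wedge u c - wedge u b) := by
  simp only [dotp, wedge, Prod.fst_sub, Prod.snd_sub] at hbc ⊢
  linear_combination (-((b.1 - a.1) * (c.2 - a.2) - (b.2 - a.2) * (c.1 - a.1))) * hu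
    - (u.1 * (b.2 - a.2) - u.2 * (b.1 - a.1)) * hbc

end Frame

section Inscribed

variable {P : Set Pt} {u a b c : Pt}

lemma InscribedNormal.dotp_eq (h : InscribedNormal P u a b c) : dotp c u = dotp b u := by
  linarith [h.2.2.2.2.1, dotp_sub c b u]

lemma InscribedNormal.triArea_eq (hu : u.1 ^ 2 + u.2 ^ 2 = 1) (h : InscribedNormal P u a b c) :
    triArea a b c = (dotp b u - dotp a u) * (wedge u c - wedge u b) / 2 := by
  have hw := wedge_sub_sub_eq (a := a) hu h.dotp_eq
  rw [triArea, hw, abs_of_nonneg (hw ▸ h.2.2.2.1)]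

lemma inscribedNormal_of_dotp_eq (hu : u.1 ^ 2 + u.2 ^ 2 = 1) (ha : a ∈ P) (hb : b ∈ P)
    (hc : c ∈ P) (hbc : dotp c u = dotp b u) (hab : dotp a u ≤ dotp b u)
    (hbc' : wedge u b ≤ wedge u c) : InscribedNormal P u a b c := by
  refine ⟨ha, hb, hc, ?_, by rw [dotp_sub, hbc, sub_self], hab⟩
  rw [wedge_sub_sub_eq hu hbc]
  exact mul_nonneg (by linarith) (by linarith)

lemma InscribedNormal.pos_of_triArea_pos (hu : u.1 ^ 2 + u.2 ^ 2 = 1)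
    (h : InscribedNormal P u a b c) (hpos : 0 < triArea a b c) :
    dotp a u < dotp b u ∧ wedge u b < wedge u c := by
  rw [h.triArea_eq hu] at hpos
  have hab : 0 ≤ dotp b u - dotp a u := sub_nonneg.mpr h.2.2.2.2.2
  rcases pos_and_pos_or_neg_and_neg_of_mul_pos
      (by linarith : 0 < (dotp b u - dotp a u) * (wedge u c - wedge u b)) with h' | h'
  · exact ⟨sub_pos.mp h'.1, sub_pos.mp h'.2⟩
  · linarith [h'.1]

lemma exists_inscribedNormal_triArea_pos {z : Pt} (hz : z ∈ interior P)
    (hu : u.1 ^ 2 + u.2 ^ 2 = 1) :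
    ∃ a b c, InscribedNormal P u a b c ∧ 0 < triArea a b c := by
  have hnear (x : Pt) : ∀ᶠ ε in 𝓝[>] (0 : ℝ), z + ε • x ∈ P := by
    have hcont : Tendsto (fun ε : ℝ => z + ε • x) (𝓝 0) (𝓝 z) := by
      simpa using ((tendsto_id (x := 𝓝 (0 : ℝ))).smul_const x).const_add z
    exact ((hcont.eventually_mem (isOpen_interior.mem_nhds hz)).mono
      fun _ h => interior_subset h).filter_mono nhdsWithin_le_nhds
  set v : Pt := (-u.2, u.1)
  obtain ⟨ε, ⟨ha, hb, hc⟩, hε⟩ :=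
    ((hnear (-u)).and ((hnear (u - v)).and (hnear (u + v)))).and self_mem_nhdsWithin |>.exists
  have hs : dotp (z + ε • (u - v)) u - dotp (z + ε • -u) u = 2 * ε := by
    simp only [dotp, v, Prod.fst_add, Prod.snd_add, Prod.smul_fst, Prod.smul_snd,
      Prod.fst_sub, Prod.snd_sub, Prod.fst_neg, Prod.snd_neg, smul_eq_mul]
    linear_combination 2 * ε * hu
  have ht : wedge u (z + ε • (u + v)) - wedge u (z + ε • (u - v)) = 2 * ε := by
    simp only [wedge, v, Prod.fst_add, Prod.snd_add, Prod.smul_fst, Prod.smul_snd,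
      Prod.fst_sub, Prod.snd_sub, smul_eq_mul]
    linear_combination 2 * ε * hu
  have hbc : dotp (z + ε • (u + v)) u = dotp (z + ε • (u - v)) u := by
    simp only [dotp, v, Prod.fst_add, Prod.snd_add, Prod.smul_fst, Prod.smul_snd,
      Prod.fst_sub, Prod.snd_sub, smul_eq_mul]
    ring
  have hε : (0 : ℝ) < ε := hε
  have hins := inscribedNormal_of_dotp_eq hu ha hb hc hbc (by linarith) (by linarith)
  refine ⟨_, _, _, hins, ?_⟩
  rw [hins.triArea_eq hu, hs, ht]
  positivity

end Inscribed

lemma eq_of_add_mul_add_le {H H' L L' : ℝ} (hH : 0 < H) (hL' : 0 < L')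
    (heq : H * L = H' * L') (hle : (H + H') * (L + L') ≤ 4 * (H * L)) : H = H' := by
  have hsq : L' * (H - H') ^ 2 ≤ 0 := by
    have hid : L' * (H - H') ^ 2 = H * ((H + H') * (L + L') - 4 * (H * L)) := by
      linear_combination (3 * H - H') * heq
    rw [hid]
    exact mul_nonpos_of_nonneg_of_nonpos hH.le (by linarith)
  have hsq' : (H - H') ^ 2 = 0 := le_antisymm (nonpos_of_mul_nonpos_right hsq hL') (sq_nonneg _)
  exact sub_eq_zero.mp (pow_eq_zero_iff two_ne_zero |>.mp hsq')

section Anchored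

variable {P : Set Pt} {u a b c : Pt}

lemma Anchored.mul_le (hu : u.1 ^ 2 + u.2 ^ 2 = 1) (h : Anchored P u a b c) {x y z : Pt}
    (hx : x ∈ P) (hy : y ∈ P) (hz : z ∈ P) (hzy : dotp z u = dotp y u)
    (hxy : dotp x u ≤ dotp y u) (hyz : wedge u y ≤ wedge u z) :
    (dotp y u - dotp x u) * (wedge u z - wedge u y)
      ≤ (dotp b u - dotp a u) * (wedge u c - wedge u b) := by
  have hins := inscribedNormal_of_dotp_eq hu hx hy hz hzy hxy hyz
  have := h.2 x y z hins
  rw [hins.triArea_eq hu, h.1.triArea_eq hu] at this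
  linarith

lemma Anchored.triArea_pos {z : Pt} (hz : z ∈ interior P) (hu : u.1 ^ 2 + u.2 ^ 2 = 1)
    (h : Anchored P u a b c) : 0 < triArea a b c := by
  obtain ⟨a', b', c', hins, hpos⟩ := exists_inscribedNormal_triArea_pos hz hu
  exact hpos.trans_le (h.2 a' b' c' hins)

lemma Anchored.dotp_le (hu : u.1 ^ 2 + u.2 ^ 2 = 1) (h : Anchored P u a b c)
    (hpos : 0 < triArea a b c) {x : Pt} (hx : x ∈ P) : dotp a u ≤ dotp x u := by
  obtain ⟨-, hbc⟩ := h.1.pos_of_triArea_pos hu hpos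
  by_contra! hxa
  have := h.mul_le hu hx h.1.2.1 h.1.2.2.1 h.1.dotp_eq (by linarith [h.1.2.2.2.2.2]) hbc.le
  nlinarith

lemma Anchored.wedge_le (hu : u.1 ^ 2 + u.2 ^ 2 = 1) (h : Anchored P u a b c)
    (hpos : 0 < triArea a b c) {x : Pt} (hx : x ∈ P) (hxb : dotp x u = dotp b u) :
    wedge u x ≤ wedge u c := by
  obtain ⟨hab, hbc⟩ := h.1.pos_of_triArea_pos hu hpos
  by_contra! hcx
  have := h.mul_le hu h.1.1 h.1.2.1 hx hxb hab.le (by linarith)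
  nlinarith

lemma Anchored.le_wedge (hu : u.1 ^ 2 + u.2 ^ 2 = 1) (h : Anchored P u a b c)
    (hpos : 0 < triArea a b c) {x : Pt} (hx : x ∈ P) (hxb : dotp x u = dotp b u) :
    wedge u b ≤ wedge u x := by
  obtain ⟨hab, hbc⟩ := h.1.pos_of_triArea_pos hu hpos
  by_contra! hxb'
  have := h.mul_le hu h.1.1 hx h.1.2.2.1 (h.1.dotp_eq.trans hxb.symm) (hxb ▸ hab.le)
    (by linarith)
  nlinarith

lemma Anchored.triArea_eq_of_anchored {a' b' c' : Pt} (h : Anchored P u a b c)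
    (h' : Anchored P u a' b' c') : triArea a' b' c' = triArea a b c :=
  le_antisymm (h.2 _ _ _ h'.1) (h'.2 _ _ _ h.1)

lemma Anchored.dotp_base_eq (hconv : Convex ℝ P) (hu : u.1 ^ 2 + u.2 ^ 2 = 1)
    {a' b' c' : Pt} (h : Anchored P u a b c) (h' : Anchored P u a' b' c')
    (hpos : 0 < triArea a b c) : dotp b u = dotp b' u := by
  have harea := h.triArea_eq_of_anchored h'
  have hpos' : 0 < triArea a' b' c' := harea ▸ hpos
  have hapex : dotp a' u = dotp a u :=
    le_antisymm (h'.dotp_le hu hpos' h.1.1) (h.dotp_le hu hpos h'.1.1)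
  obtain ⟨hab, hbc⟩ := h.1.pos_of_triArea_pos hu hpos
  obtain ⟨-, hbc'⟩ := h'.1.pos_of_triArea_pos hu hpos'
  have hmem {x y : Pt} (hx : x ∈ P) (hy : y ∈ P) :
      (1 / 2 : ℝ) • x + (1 / 2 : ℝ) • y ∈ P :=
    hconv hx hy (by norm_num) (by norm_num) (by norm_num)
  have hmid := h.mul_le hu h.1.1 (hmem h.1.2.1 h'.1.2.1) (hmem h.1.2.2.1 h'.1.2.2.1)
    (by rw [dotp_smul_add_smul, dotp_smul_add_smul, h.1.dotp_eq, h'.1.dotp_eq])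
    (by rw [dotp_smul_add_smul]; linarith [h.1.2.2.2.2.2, h'.1.2.2.2.2.2])
    (by rw [wedge_smul_add_smul, wedge_smul_add_smul]; linarith)
  rw [dotp_smul_add_smul, wedge_smul_add_smul, wedge_smul_add_smul] at hmid
  rw [h.1.triArea_eq hu, h'.1.triArea_eq hu, hapex] at harea
  have := eq_of_add_mul_add_le (H' := dotp b' u - dotp a u) (L := wedge u c - wedge u b)
    (sub_pos.mpr hab) (sub_pos.mpr hbc') (by linarith) (by linarith [hmid])
  linarith

theorem Anchored.base_unique (hconv : Convex ℝ P) {z : Pt} (hz : z ∈ interior P)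
    (hu : u.1 ^ 2 + u.2 ^ 2 = 1) {a' b' c' : Pt} (h : Anchored P u a b c)
    (h' : Anchored P u a' b' c') : b = b' ∧ c = c' := by
  have hpos := h.triArea_pos hz hu
  have hpos' := h'.triArea_pos hz hu
  have hb : dotp b u = dotp b' u := h.dotp_base_eq hconv hu h' hpos
  have hc : dotp c u = dotp c' u := by rw [h.1.dotp_eq, h'.1.dotp_eq, hb]
  refine ⟨eq_of_dotp_eq_of_wedge_eq hu hb ?_, eq_of_dotp_eq_of_wedge_eq hu hc ?_⟩
  · exact le_antisymm (h.le_wedge hu hpos h'.1.2.1 hb.symm) (h'.le_wedge hu hpos' h.1.2.1 hb)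
  · exact le_antisymm (h'.wedge_le hu hpos' h.1.2.2.1 (hc.trans h'.1.dotp_eq))
      (h.wedge_le hu hpos h'.1.2.2.1 (hc.symm.trans h.1.dotp_eq))

end Anchored

-- For unit vectors `u`, `w`, the rotation carrying `u` to `w`.
def rotTo (u w x : Pt) : Pt :=
  (dotp u w * x.1 - wedge u w * x.2, wedge u w * x.1 + dotp u w * x.2)

def rotHomothety (z : Pt) (k : ℝ) (u w x : Pt) : Pt := z + k • rotTo u w (x - z)

section Rotation

variable {u w : Pt}

lemma dotp_rotTo (hw : w.1 ^ 2 + w.2 ^ 2 = 1) (x : Pt) : dotp (rotTo u w x) w = dotp x u := by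
  simp only [rotTo, dotp, wedge]
  linear_combination (x.1 * u.1 + x.2 * u.2) * hw

lemma wedge_rotTo (hu : u.1 ^ 2 + u.2 ^ 2 = 1) (hw : w.1 ^ 2 + w.2 ^ 2 = 1) (x y : Pt) :
    wedge (rotTo u w x) (rotTo u w y) = wedge x y := by
  simp only [rotTo, dotp, wedge]
  linear_combination (x.1 * y.2 - x.2 * y.1) * (w.1 ^ 2 + w.2 ^ 2) * hu
    + (x.1 * y.2 - x.2 * y.1) * hw

lemma rotTo_self (hu : u.1 ^ 2 + u.2 ^ 2 = 1) (x : Pt) : rotTo u u x = x := by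
  simp only [rotTo, dotp, wedge]
  ext
  · linear_combination x.1 * hu
  · linear_combination x.2 * hu

lemma continuous_rotHomothety (z : Pt) (k : ℝ) (u x : Pt) :
    Continuous fun w => rotHomothety z k u w x := by
  unfold rotHomothety rotTo; fun_prop

lemma rotHomothety_sub (z : Pt) (k : ℝ) (x y : Pt) :
    rotHomothety z k u w x - rotHomothety z k u w y = k • rotTo u w (x - y) := by
  ext <;> simp only [rotHomothety, rotTo, Prod.fst_add, Prod.snd_add, Prod.fst_sub,
    Prod.snd_sub, Prod.smul_fst, Prod.smul_snd, smul_eq_mul] <;> ring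

lemma triArea_rotHomothety (hu : u.1 ^ 2 + u.2 ^ 2 = 1) (hw : w.1 ^ 2 + w.2 ^ 2 = 1)
    (z : Pt) (k : ℝ) (a b c : Pt) :
    triArea (rotHomothety z k u w a) (rotHomothety z k u w b) (rotHomothety z k u w c)
      = k ^ 2 * triArea a b c := by
  simp only [triArea, rotHomothety_sub, wedge_smul_smul, wedge_rotTo hu hw, abs_mul,
    abs_of_nonneg (sq_nonneg k)]
  ring

lemma InscribedNormal.map_rotHomothety {P : Set Pt} {a b c : Pt} (hu : u.1 ^ 2 + u.2 ^ 2 = 1)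
    (hw : w.1 ^ 2 + w.2 ^ 2 = 1) (h : InscribedNormal P u a b c) {z : Pt} {k : ℝ} (hk : 0 ≤ k)
    (ha : rotHomothety z k u w a ∈ P) (hb : rotHomothety z k u w b ∈ P)
    (hc : rotHomothety z k u w c ∈ P) :
    InscribedNormal P w (rotHomothety z k u w a) (rotHomothety z k u w b)
      (rotHomothety z k u w c) := by
  refine ⟨ha, hb, hc, ?_, ?_, ?_⟩
  · rw [rotHomothety_sub, rotHomothety_sub, wedge_smul_smul, wedge_rotTo hu hw]
    exact mul_nonneg (sq_nonneg k) h.2.2.2.1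
  · rw [rotHomothety_sub, dotp_smul, dotp_rotTo hw, h.2.2.2.2.1, mul_zero]
  · have hba := dotp_sub (rotHomothety z k u w b) (rotHomothety z k u w a) w
    rw [rotHomothety_sub, dotp_smul, dotp_rotTo hw, dotp_sub] at hba
    nlinarith [mul_nonneg hk (sub_nonneg.mpr h.2.2.2.2.2)]

lemma eventually_rotHomothety_mem {P : Set Pt} (hconv : Convex ℝ P) {z : Pt}
    (hz : z ∈ interior P) (hu : u.1 ^ 2 + u.2 ^ 2 = 1) {k : ℝ} (hk : k ∈ Ico 0 1) {x : Pt}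
    (hx : x ∈ P) : ∀ᶠ w in 𝓝 u, rotHomothety z k u w x ∈ P := by
  have hint : rotHomothety z k u u x ∈ interior P := by
    have := hconv.add_smul_sub_mem_interior hx hz (t := 1 - k)
      ⟨by linarith [hk.2], by linarith [hk.1]⟩
    convert this using 1
    rw [rotHomothety, rotTo_self hu]
    ext <;> simp only [Prod.fst_add, Prod.snd_add, Prod.fst_sub, Prod.snd_sub, Prod.smul_fst,
      Prod.smul_snd, smul_eq_mul] <;> ring
  exact ((continuous_rotHomothety z k u x).continuousAt.eventually_mem
    (isOpen_interior.mem_nhds hint)).mono fun _ h => interior_subset h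

end Rotation

lemma isClosed_setOf_inscribedNormal {P : Set Pt} (hP : IsClosed P) :
    IsClosed {p : Pt × Pt × Pt × Pt | InscribedNormal P p.1 p.2.1 p.2.2.1 p.2.2.2} := by
  simp only [InscribedNormal, ofPred_and]
  exact (hP.preimage (by fun_prop)).inter <| (hP.preimage (by fun_prop)).inter <|
    (hP.preimage (by fun_prop)).inter <| (isClosed_le (by fun_prop) (by fun_prop)).inter <|
    (isClosed_eq (by fun_prop) (by fun_prop)).inter (isClosed_le (by fun_prop) (by fun_prop))

theorem anchored_of_tendsto {ι : Type*} {l : Filter ι} [l.NeBot] {P : Set Pt}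
    (hconv : Convex ℝ P) (hcl : IsClosed P) {z : Pt} (hz : z ∈ interior P)
    {u a₀ b₀ c₀ : Pt} (hu : u.1 ^ 2 + u.2 ^ 2 = 1) {w a b c : ι → Pt}
    (hw : ∀ᶠ i in l, (w i).1 ^ 2 + (w i).2 ^ 2 = 1)
    (hanch : ∀ᶠ i in l, Anchored P (w i) (a i) (b i) (c i)) (hwu : Tendsto w l (𝓝 u))
    (habc : Tendsto (fun i => (a i, b i, c i)) l (𝓝 (a₀, b₀, c₀))) :
    Anchored P u a₀ b₀ c₀ := by
  refine ⟨((isClosed_setOf_inscribedNormal hcl).mem_of_tendsto (hwu.prodMk_nhds habc)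
    (hanch.mono fun _ h => h.1) :), fun a' b' c' h' => ?_⟩
  have hcont : Continuous fun p : Pt × Pt × Pt => triArea p.1 p.2.1 p.2.2 := by fun_prop
  have harea : Tendsto (fun i => triArea (a i) (b i) (c i)) l (𝓝 (triArea a₀ b₀ c₀)) :=
    ((hcont.tendsto (a₀, b₀, c₀)).comp habc :)
  have hscaled (k : ℝ) (hk : k ∈ Ico 0 1) :
      k ^ 2 * triArea a' b' c' ≤ triArea a₀ b₀ c₀ := by
    have hmem := hwu.eventually <| (eventually_rotHomothety_mem hconv hz hu hk h'.1).and <|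
      (eventually_rotHomothety_mem hconv hz hu hk h'.2.1).and
        (eventually_rotHomothety_mem hconv hz hu hk h'.2.2.1)
    refine ge_of_tendsto harea ?_
    filter_upwards [hmem, hw, hanch] with i ⟨ha, hb, hc⟩ hwi hi
    rw [← triArea_rotHomothety hu hwi z k]
    exact hi.2 _ _ _ (h'.map_rotHomothety hu hwi hk.1 ha hb hc)
  have hlim :
      Tendsto (fun k : ℝ => k ^ 2 * triArea a' b' c') (𝓝[<] 1) (𝓝 (triArea a' b' c')) := by
    have : Continuous fun k : ℝ => k ^ 2 * triArea a' b' c' := by fun_prop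
    simpa using (this.tendsto 1).mono_left nhdsWithin_le_nhds
  exact le_of_tendsto hlim (eventually_of_mem (Ico_mem_nhdsLT one_pos) hscaled)

theorem continuousOn_base_of_anchored {P : Set Pt} (hconv : Convex ℝ P) (hcpt : IsCompact P)
    {z : Pt} (hz : z ∈ interior P) {A B C : Pt → Pt}
    (hanch : ∀ u : Pt, u.1 ^ 2 + u.2 ^ 2 = 1 → Anchored P u (A u) (B u) (C u)) :
    ContinuousOn (fun u => (B u, C u)) {u : Pt | u.1 ^ 2 + u.2 ^ 2 = 1} := by
  intro u hu
  rw [ContinuousWithinAt, tendsto_iff_ultrafilter]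
  intro U hU
  have hcirc : ∀ᶠ w in (U : Filter Pt), w.1 ^ 2 + w.2 ^ 2 = 1 := hU self_mem_nhdsWithin
  obtain ⟨⟨a₀, b₀, c₀⟩, -, hlim⟩ := (hcpt.prod (hcpt.prod hcpt)).ultrafilter_le_nhds
    (U.map fun w => (A w, B w, C w)) <| by
      rw [Ultrafilter.coe_map, le_principal_iff]
      exact hcirc.mono fun w hw => ⟨(hanch w hw).1.1, (hanch w hw).1.2.1, (hanch w hw).1.2.2.1⟩
  rw [Ultrafilter.coe_map] at hlim
  have h₀ := anchored_of_tendsto hconv hcpt.isClosed hz hu hcirc (hcirc.mono hanch)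
    (tendsto_id.mono_left (hU.trans nhdsWithin_le_nhds)) hlim
  obtain ⟨rfl, rfl⟩ := (hanch u hu).base_unique hconv hz hu h₀
  exact (continuous_snd.tendsto _).comp hlim

/-- The base vertices `b(u)`, `c(u)` of the (unique) triangle anchored to
`u` depend continuously on the unit vector `u`. -/
theorem stmt_9 (S : Finset Pt) (hS : ¬ Collinear ℝ (S : Set Pt))
    (P : Set Pt) (hP : P = convexHull ℝ (S : Set Pt))
    (A B C : Pt → Pt)
    (hanch : ∀ u : Pt, u.1 ^ 2 + u.2 ^ 2 = 1 → Anchored P u (A u) (B u) (C u)) :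
    ContinuousOn B {u : Pt | u.1 ^ 2 + u.2 ^ 2 = 1} ∧
      ContinuousOn C {u : Pt | u.1 ^ 2 + u.2 ^ 2 = 1} := by
  have hconv : Convex ℝ P := hP ▸ convex_convexHull ℝ _
  have hcpt : IsCompact P := hP ▸ S.finite_toSet.isCompact_convexHull ℝ
  obtain ⟨z, hz⟩ : (interior P).Nonempty := by
    rw [hP, interior_convexHull_nonempty_iff_affineSpan_eq_top]
    exact affineSpan_eq_top_of_not_collinear (by simp [Module.finrank_prod]) hS
  have hBC := continuousOn_base_of_anchored hconv hcpt hz hanch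
  exact ⟨hBC.fst, hBC.snd⟩
end
end

section
/- Let abc be candidate-anchored to u in a convex polygon P. Then abc is anchored to u if and only if Q₋₊(a,b,c) ≥ 0 and Q₊₋(a,b,c) ≤ 0. -/
noncomputable section
open Set Real

/-- Euclidean length in the plane. -/
def elen (p : Pt) : ℝ := Real.sqrt (p.1 ^ 2 + p.2 ^ 2)

/-- Twice the signed area of the triangle `a b'(h) c'(h)`, where `b'(h)` and `c'(h)`
are the intersections of the line through `b`, `c` translated by `‖c-b‖·h·u` with the
lines `b + ℝv` and `c + ℝw`. Its derivative at `h = 0` is the area derivative `Q`. -/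
def slideFam (a b c v w u : Pt) : ℝ → ℝ := fun h =>
  wedge ((b + (elen (c - b) * h / dotp v u) • v) - a)
        ((c + (elen (c - b) * h / dotp w u) • w) - a)

/-- `v` is a forward (counter-clockwise) tangent direction of `∂P` at the boundary
point `x`: the boundary contains a segment from `x` in direction `v`, and `P` lies to
the left of the directed line through `x` with direction `v`. -/
def FwdTangent (P : Set Pt) (x v : Pt) : Prop :=
  (∃ ε > (0:ℝ), ∀ t ∈ Icc (0:ℝ) ε, x + t • v ∈ frontier P) ∧
    ∀ y ∈ P, 0 ≤ wedge v (y - x)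

/-- `v` is a backward (clockwise) tangent direction of `∂P` at the boundary point `x`:
the boundary contains a segment arriving at `x` in direction `v`, and `P` lies to the
left of the directed line through `x` with direction `v`. -/
def BwdTangent (P : Set Pt) (x v : Pt) : Prop :=
  (∃ ε > (0:ℝ), ∀ t ∈ Icc (0:ℝ) ε, x - t • v ∈ frontier P) ∧
    ∀ y ∈ P, 0 ≤ wedge v (y - x)


/-! Take `dotp · u` as height and `wedge u ·` as horizontal coordinate. If `bc` is horizontal
at height `Δ` above `a` and has length `D`, the doubled area is `Δ * D`, and `Q` is
`‖c - b‖ * (D + Δ * (drift u w - drift u v))`.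

If `abc` is anchored, sliding the chord along the one-sided tangents keeps the triangle
admissible, so `Q₋₊` and `Q₊₋` are one-sided derivatives at a one-sided maximum. Conversely,
the supporting lines through the tangents at `b` and `c` bound the chord at height `τ` by two
affine functions of `τ`, and the signs of `Q` make `τ` times the smaller bound maximal at
`τ = Δ`. In the degenerate case `Δ = 0` both sides fail: the area vanishes while an
interior point of `P` gives a positive one, and the two signs of `Q` would force `D = 0`. -/

open Filter Topology

section Coordinates

variable {u : Pt}

lemma dotp_eq_of_dotp_sub_eq_zero {p q : Pt} (h : dotp (q - p) u = 0) :
    dotp q u = dotp p u := by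
  simp only [dotp, Prod.fst_sub, Prod.snd_sub] at h ⊢
  linarith

lemma elen_pos {p : Pt} (hp : p ≠ 0) : 0 < elen p := by
  refine Real.sqrt_pos.2 (lt_of_le_of_ne (by positivity) fun h => hp ?_)
  have h1 : p.1 = 0 := by nlinarith [sq_nonneg p.1, sq_nonneg p.2]
  have h2 : p.2 = 0 := by nlinarith [sq_nonneg p.1, sq_nonneg p.2]
  exact Prod.ext h1 h2

variable (hu : u.1 ^ 2 + u.2 ^ 2 = 1)
include hu

lemma eq_of_dotp_eq_of_wedge_eq_s15 {p q : Pt} (h1 : dotp p u = dotp q u)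
    (h2 : wedge u p = wedge u q) : p = q := by
  simp only [wedge, dotp] at h1 h2
  exact Prod.ext (by linear_combination u.1 * h1 - u.2 * h2 + (q.1 - p.1) * hu)
    (by linear_combination u.2 * h1 + u.1 * h2 + (q.2 - p.2) * hu)

lemma wedge_sub_eq (v x p : Pt) :
    wedge v (x - p) = dotp v u * (wedge u x - wedge u p)
      - wedge u v * (dotp x u - dotp p u) := by
  simp only [wedge, dotp, Prod.fst_sub, Prod.snd_sub]
  linear_combination (v.2 * (x.1 - p.1) - v.1 * (x.2 - p.2)) * hu

lemma sub_wedge_eq (p q w : Pt) :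
    wedge (p - q) w = (dotp p u - dotp q u) * wedge u w
      - (wedge u p - wedge u q) * dotp w u := by
  simp only [wedge, dotp, Prod.fst_sub, Prod.snd_sub]
  linear_combination ((p.2 - q.2) * w.1 - (p.1 - q.1) * w.2) * hu

lemma wedge_sub_sub_of_dotp_eq {a b c : Pt} (h : dotp c u = dotp b u) :
    wedge (b - a) (c - a) = (dotp b u - dotp a u) * (wedge u c - wedge u b) := by
  simp only [wedge, dotp, Prod.fst_sub, Prod.snd_sub] at h ⊢
  linear_combination ((b.2 - a.2) * (c.1 - a.1) - (b.1 - a.1) * (c.2 - a.2)) * hu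
    - ((u.1 * b.2 - u.2 * b.1) - (u.1 * a.2 - u.2 * a.1)) * h

end Coordinates

/-- Horizontal displacement per unit of height along `v`. -/
def drift (u v : Pt) : ℝ := wedge u v / dotp v u

section Tangents

variable {u v x y : Pt} (hu : u.1 ^ 2 + u.2 ^ 2 = 1)
include hu

lemma drift_mul_le_of_wedge_nonneg (hv : 0 < dotp v u) (h : 0 ≤ wedge v (y - x)) :
    drift u v * (dotp y u - dotp x u) ≤ wedge u y - wedge u x := by
  rw [wedge_sub_eq hu] at h
  rw [drift, div_mul_eq_mul_div, div_le_iff₀ hv]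
  linarith

lemma le_drift_mul_of_wedge_nonneg (hv : dotp v u < 0) (h : 0 ≤ wedge v (y - x)) :
    wedge u y - wedge u x ≤ drift u v * (dotp y u - dotp x u) := by
  rw [wedge_sub_eq hu] at h
  rw [drift, div_mul_eq_mul_div, le_div_iff_of_neg hv]
  linarith

lemma dotp_pos_of_wedge_nonneg (hlevel : dotp y u = dotp x u)
    (hD : 0 < wedge u y - wedge u x) (hv : dotp v u ≠ 0) (h : 0 ≤ wedge v (y - x)) :
    0 < dotp v u := by
  rw [wedge_sub_eq hu, hlevel, sub_self, mul_zero, sub_zero] at h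
  exact lt_of_le_of_ne (nonneg_of_mul_nonneg_left h hD) hv.symm

lemma dotp_neg_of_wedge_nonneg (hlevel : dotp y u = dotp x u)
    (hD : wedge u y - wedge u x < 0) (hv : dotp v u ≠ 0) (h : 0 ≤ wedge v (y - x)) :
    dotp v u < 0 := by
  rw [wedge_sub_eq hu, hlevel, sub_self, mul_zero, sub_zero] at h
  exact lt_of_le_of_ne (nonpos_of_mul_nonneg_left h hD) hv

end Tangents

section Slide

variable {u a b c v w : Pt}

lemma dotp_slide_sub_eq_zero (hv : dotp v u ≠ 0) (hw : dotp w u ≠ 0)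
    (hbc : dotp (c - b) u = 0) (m : ℝ) :
    dotp ((c + (m / dotp w u) • w) - (b + (m / dotp v u) • v)) u = 0 := by
  have ev : m / dotp v u * dotp v u = m := div_mul_cancel₀ m hv
  have ew : m / dotp w u * dotp w u = m := div_mul_cancel₀ m hw
  simp only [dotp, Prod.fst_sub, Prod.snd_sub, Prod.fst_add, Prod.snd_add,
    Prod.smul_fst, Prod.smul_snd, smul_eq_mul] at ev ew hbc ⊢
  linear_combination hbc + ew - ev

lemma slideFam_zero : slideFam a b c v w u 0 = wedge (b - a) (c - a) := by
  simp [slideFam]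

lemma continuous_slideFam : Continuous (slideFam a b c v w u) := by
  unfold slideFam wedge
  fun_prop

lemma hasDerivAt_slideFam (hu : u.1 ^ 2 + u.2 ^ 2 = 1) (hv : dotp v u ≠ 0)
    (hw : dotp w u ≠ 0) (hlevel : dotp c u = dotp b u) :
    HasDerivAt (slideFam a b c v w u)
      (elen (c - b) * (wedge u c - wedge u b
        + (dotp b u - dotp a u) * (drift u w - drift u v))) 0 := by
  set L := elen (c - b)
  have hquad : slideFam a b c v w u = fun h => wedge (b - a) (c - a)
      + (L / dotp v u * wedge v (c - a) + L / dotp w u * wedge (b - a) w) * h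
      + (L / dotp v u * (L / dotp w u) * wedge v w) * h ^ 2 := by
    funext h
    simp only [slideFam, wedge, Prod.fst_add, Prod.snd_add, Prod.fst_sub, Prod.snd_sub,
      Prod.smul_fst, Prod.smul_snd, smul_eq_mul]
    ring
  have hd := (((hasDerivAt_id (0 : ℝ)).const_mul
    (L / dotp v u * wedge v (c - a) + L / dotp w u * wedge (b - a) w)).const_add
      (wedge (b - a) (c - a))).add
    ((hasDerivAt_pow 2 (0 : ℝ)).const_mul (L / dotp v u * (L / dotp w u) * wedge v w))
  simp only [id, mul_one] at hd
  rw [hquad]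
  refine hd.congr_deriv ?_
  rw [wedge_sub_eq hu, sub_wedge_eq hu, drift, drift, hlevel]
  field_simp
  ring

end Slide

lemma HasDerivAt.nonpos_of_isLocalMaxOn_Ici {f : ℝ → ℝ} {q x : ℝ} (hf : HasDerivAt f q x)
    (h : IsLocalMaxOn f (Ici x) x) : q ≤ 0 := by
  have hseg : segment ℝ x (x + 1) ⊆ Ici x := by
    rw [segment_eq_Icc (by linarith)]
    exact Icc_subset_Ici_self
  simpa using h.hasFDerivWithinAt_nonpos hf.hasFDerivAt.hasFDerivWithinAt
    (mem_posTangentConeAt_of_segment_subset hseg)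

lemma HasDerivAt.nonneg_of_isLocalMaxOn_Iic {f : ℝ → ℝ} {q x : ℝ} (hf : HasDerivAt f q x)
    (h : IsLocalMaxOn f (Iic x) x) : 0 ≤ q := by
  have hseg : segment ℝ x (x + -1) ⊆ Iic x := by
    rw [segment_symm, segment_eq_Icc (by linarith)]
    exact Icc_subset_Iic_self
  simpa using h.hasFDerivWithinAt_nonpos hf.hasFDerivAt.hasFDerivWithinAt
    (mem_posTangentConeAt_of_segment_subset hseg)

section LocalMax

variable {P : Set Pt} {u a b c v w x : Pt}

lemma FwdTangent.eventually_mem (hv : FwdTangent P x v) (hP : IsClosed P) {f : ℝ → ℝ}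
    {s : Set ℝ} (hf : ContinuousAt f 0) (hf0 : f 0 = 0) (hfs : ∀ h ∈ s, 0 ≤ f h) :
    ∀ᶠ h in 𝓝[s] 0, x + f h • v ∈ P := by
  obtain ⟨ε, hε, hseg⟩ := hv.1
  have hf' : Tendsto f (𝓝 0) (𝓝 0) := by
    simpa only [ContinuousAt, hf0] using hf
  filter_upwards [nhdsWithin_le_nhds (hf'.eventually (eventually_le_nhds hε)),
    self_mem_nhdsWithin] with h hfε hs
  exact hP.frontier_subset (hseg _ ⟨hfs h hs, hfε⟩)

lemma BwdTangent.eventually_mem (hv : BwdTangent P x v) (hP : IsClosed P) {f : ℝ → ℝ}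
    {s : Set ℝ} (hf : ContinuousAt f 0) (hf0 : f 0 = 0) (hfs : ∀ h ∈ s, f h ≤ 0) :
    ∀ᶠ h in 𝓝[s] 0, x + f h • v ∈ P := by
  obtain ⟨ε, hε, hseg⟩ := hv.1
  have hf' : Tendsto f (𝓝 0) (𝓝 0) := by
    simpa only [ContinuousAt, hf0] using hf
  filter_upwards [nhdsWithin_le_nhds (hf'.eventually (eventually_ge_nhds (neg_lt_zero.2 hε))),
    self_mem_nhdsWithin] with h hfε hs
  rw [← sub_neg_eq_add, ← neg_smul]
  exact hP.frontier_subset (hseg _ ⟨neg_nonneg.2 (hfs h hs), neg_le.1 hfε⟩)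

lemma Anchored.isLocalMaxOn_slideFam (hA : Anchored P u a b c)
    (hamin : ∀ x ∈ P, dotp a u ≤ dotp x u) (hv : dotp v u ≠ 0) (hw : dotp w u ≠ 0)
    (hpos : 0 < wedge (b - a) (c - a)) {s : Set ℝ}
    (hb : ∀ᶠ h in 𝓝[s] 0, b + (elen (c - b) * h / dotp v u) • v ∈ P)
    (hc : ∀ᶠ h in 𝓝[s] 0, c + (elen (c - b) * h / dotp w u) • w ∈ P) :
    IsLocalMaxOn (slideFam a b c v w u) s 0 := by
  have hnear : ∀ᶠ h in 𝓝[s] 0, 0 < slideFam a b c v w u h :=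
    nhdsWithin_le_nhds ((continuous_slideFam.tendsto 0).eventually
      (eventually_gt_nhds (slideFam_zero ▸ hpos)))
  filter_upwards [hb, hc, hnear] with h hbh hch hh
  have hle := hA.2 _ _ _ ⟨hA.1.1, hbh, hch, hh.le,
    dotp_slide_sub_eq_zero hv hw hA.1.2.2.2.2.1 _, hamin _ hbh⟩
  change |slideFam a b c v w u h| / 2 ≤ |wedge (b - a) (c - a)| / 2 at hle
  rw [abs_of_pos hh, abs_of_pos hpos] at hle
  rw [slideFam_zero]
  linarith

lemma Anchored.isLocalMaxOn_Iic_slideFam (hA : Anchored P u a b c) (hP : IsClosed P)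
    (hamin : ∀ x ∈ P, dotp a u ≤ dotp x u) (hpos : 0 < wedge (b - a) (c - a))
    (hv : BwdTangent P b v) (hw : FwdTangent P c w) (hvu : 0 < dotp v u)
    (hwu : dotp w u < 0) :
    IsLocalMaxOn (slideFam a b c v w u) (Iic 0) 0 :=
  hA.isLocalMaxOn_slideFam hamin hvu.ne' hwu.ne hpos
    (hv.eventually_mem hP (by fun_prop) (by simp) fun _ hh =>
      div_nonpos_of_nonpos_of_nonneg (mul_nonpos_of_nonneg_of_nonpos (Real.sqrt_nonneg _) hh)
        hvu.le)
    (hw.eventually_mem hP (by fun_prop) (by simp) fun _ hh =>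
      div_nonneg_of_nonpos (mul_nonpos_of_nonneg_of_nonpos (Real.sqrt_nonneg _) hh) hwu.le)

lemma Anchored.isLocalMaxOn_Ici_slideFam (hA : Anchored P u a b c) (hP : IsClosed P)
    (hamin : ∀ x ∈ P, dotp a u ≤ dotp x u) (hpos : 0 < wedge (b - a) (c - a))
    (hv : FwdTangent P b v) (hw : BwdTangent P c w) (hvu : 0 < dotp v u)
    (hwu : dotp w u < 0) :
    IsLocalMaxOn (slideFam a b c v w u) (Ici 0) 0 :=
  hA.isLocalMaxOn_slideFam hamin hvu.ne' hwu.ne hpos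
    (hv.eventually_mem hP (by fun_prop) (by simp) fun _ hh =>
      div_nonneg (mul_nonneg (Real.sqrt_nonneg _) hh) hvu.le)
    (hw.eventually_mem hP (by fun_prop) (by simp) fun _ hh =>
      div_nonpos_of_nonneg_of_nonpos (mul_nonneg (Real.sqrt_nonneg _) hh) hwu.le)

end LocalMax

lemma mul_le_of_le_tangent_lines {Δ D τ E k₁ k₂ : ℝ} (hΔ : 0 < Δ) (hD : 0 ≤ D) (hτ : 0 ≤ τ)
    (hk₁ : 0 ≤ D + Δ * k₁) (hk₂ : D + Δ * k₂ ≤ 0)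
    (hE₁ : E ≤ D + k₁ * (τ - Δ)) (hE₂ : E ≤ D + k₂ * (τ - Δ)) : τ * E ≤ Δ * D := by
  rcases le_total τ Δ with h | h
  · have key : τ * E ≤ τ * (D + k₁ * (τ - Δ)) := mul_le_mul_of_nonneg_left hE₁ hτ
    nlinarith [mul_nonneg (mul_nonneg hτ (sub_nonneg.2 h)) hk₁,
      mul_nonneg (mul_nonneg (sub_nonneg.2 h) (sub_nonneg.2 h)) hD]
  · have key : τ * E ≤ τ * (D + k₂ * (τ - Δ)) := mul_le_mul_of_nonneg_left hE₂ hτ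
    nlinarith [mul_nonneg (mul_nonneg hτ (sub_nonneg.2 h)) (neg_nonneg.2 hk₂),
      mul_nonneg (mul_nonneg (sub_nonneg.2 h) (sub_nonneg.2 h)) hD]

section Chords

variable {P : Set Pt} {u a b c b' c' v w : Pt} (hu : u.1 ^ 2 + u.2 ^ 2 = 1)
include hu

lemma wedge_sub_le_of_tangents (hv : 0 < dotp v u) (hw : dotp w u < 0)
    (hvb : 0 ≤ wedge v (b' - b)) (hwc : 0 ≤ wedge w (c' - c))
    (hlevel : dotp c u = dotp b u) (hlevel' : dotp c' u = dotp b' u) :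
    wedge u c' - wedge u b'
      ≤ wedge u c - wedge u b + (drift u w - drift u v) * (dotp b' u - dotp b u) := by
  have hb := drift_mul_le_of_wedge_nonneg hu hv hvb
  have hc := le_drift_mul_of_wedge_nonneg hu hw hwc
  rw [hlevel, hlevel'] at hc
  linarith

lemma anchored_of_tangent_bounds {vp vm wp wm : Pt} (ha : a ∈ P) (hbP : b ∈ P) (hcP : c ∈ P)
    (hccw : 0 ≤ wedge (b - a) (c - a)) (hbcu : dotp (c - b) u = 0)
    (hamin : ∀ x ∈ P, dotp a u ≤ dotp x u) (hΔ : dotp a u < dotp b u)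
    (hD : 0 < wedge u c - wedge u b)
    (hvp : ∀ y ∈ P, 0 ≤ wedge vp (y - b)) (hvm : ∀ y ∈ P, 0 ≤ wedge vm (y - b))
    (hwp : ∀ y ∈ P, 0 ≤ wedge wp (y - c)) (hwm : ∀ y ∈ P, 0 ≤ wedge wm (y - c))
    (hvpu : 0 < dotp vp u) (hvmu : 0 < dotp vm u) (hwpu : dotp wp u < 0) (hwmu : dotp wm u < 0)
    (hQmp : 0 ≤ wedge u c - wedge u b + (dotp b u - dotp a u) * (drift u wp - drift u vm))
    (hQpm : wedge u c - wedge u b + (dotp b u - dotp a u) * (drift u wm - drift u vp) ≤ 0) :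
    Anchored P u a b c := by
  have hlevel := dotp_eq_of_dotp_sub_eq_zero hbcu
  refine ⟨⟨ha, hbP, hcP, hccw, hbcu, hamin b hbP⟩, ?_⟩
  rintro a' b' c' ⟨ha', hb', hc', hccw', hbc', hab'⟩
  have hlevel' := dotp_eq_of_dotp_sub_eq_zero hbc'
  rw [triArea, triArea, abs_of_nonneg hccw', abs_of_nonneg hccw,
    wedge_sub_sub_of_dotp_eq hu hlevel', wedge_sub_sub_of_dotp_eq hu hlevel]
  gcongr ?_ / 2
  rcases le_or_gt (wedge u c' - wedge u b') 0 with hE | hE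
  · nlinarith [mul_nonpos_of_nonneg_of_nonpos (sub_nonneg.2 hab') hE]
  have hchord (v w : Pt) (hv : 0 < dotp v u) (hw : dotp w u < 0)
      (hvb : ∀ y ∈ P, 0 ≤ wedge v (y - b)) (hwc : ∀ y ∈ P, 0 ≤ wedge w (y - c)) :=
    sub_sub_sub_cancel_right (dotp b' u) (dotp b u) (dotp a u) ▸
      wedge_sub_le_of_tangents hu hv hw (hvb b' hb') (hwc c' hc') hlevel hlevel'
  calc (dotp b' u - dotp a' u) * (wedge u c' - wedge u b')
      ≤ (dotp b' u - dotp a u) * (wedge u c' - wedge u b') := by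
        gcongr
        exact hamin a' ha'
    _ ≤ (dotp b u - dotp a u) * (wedge u c - wedge u b) :=
        mul_le_of_le_tangent_lines (sub_pos.2 hΔ) hD.le (by linarith [hamin b' hb']) hQmp hQpm
          (hchord vm wp hvmu hwpu hvm hwp) (hchord vp wm hvpu hwmu hvp hwm)

end Chords

lemma interior_convexHull_nonempty_of_not_collinear {V : Type*} [NormedAddCommGroup V]
    [NormedSpace ℝ V] [FiniteDimensional ℝ V] (hV : Module.finrank ℝ V = 2) {s : Set V}
    (hs : ¬ Collinear ℝ s) : (interior (convexHull ℝ s)).Nonempty := by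
  have hne : s.Nonempty := nonempty_iff_ne_empty.2 fun h => hs (h ▸ collinear_empty ℝ V)
  rw [(convex_convexHull ℝ s).interior_nonempty_iff_affineSpan_eq_top, affineSpan_convexHull,
    AffineSubspace.affineSpan_eq_top_iff_vectorSpan_eq_top_of_nonempty ℝ V V hne]
  rw [collinear_iff_finrank_le_one] at hs
  exact Submodule.eq_top_of_finrank_eq (le_antisymm (Submodule.finrank_le _) (by omega))

lemma exists_smul_mem_of_mem_interior {P : Set Pt} {x : Pt} (hx : x ∈ interior P) (z : Pt) :
    ∃ t > (0 : ℝ), x + t • z ∈ P := by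
  have hnear : ∀ᶠ t in 𝓝 (0 : ℝ), x + t • z ∈ P :=
    ((by fun_prop : Continuous fun t : ℝ => x + t • z).tendsto 0).eventually
      (by simpa using mem_interior_iff_mem_nhds.1 hx)
  have hright : ∀ᶠ t in 𝓝[>] (0 : ℝ), x + t • z ∈ P := nhdsWithin_le_nhds hnear
  obtain ⟨t, hP, ht⟩ := (hright.and self_mem_nhdsWithin).exists
  exact ⟨t, ht, hP⟩

section Flat

variable {P : Set Pt} {u a : Pt} (hu : u.1 ^ 2 + u.2 ^ 2 = 1)
include hu

lemma exists_inscribedNormal_triArea_pos_s15 (hint : (interior P).Nonempty) (ha : a ∈ P)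
    (hamin : ∀ x ∈ P, dotp a u ≤ dotp x u) :
    ∃ b c, InscribedNormal P u a b c ∧ 0 < triArea a b c := by
  obtain ⟨x, hx⟩ := hint
  obtain ⟨t, ht, hxt⟩ := exists_smul_mem_of_mem_interior hx (-u)
  obtain ⟨s, hs, hxs⟩ := exists_smul_mem_of_mem_interior hx (-u.2, u.1)
  have hax : dotp a u < dotp x u := by
    have := hamin _ hxt
    simp only [dotp, Prod.fst_add, Prod.snd_add, Prod.smul_fst, Prod.smul_snd, Prod.fst_neg,
      Prod.snd_neg, smul_eq_mul] at this ⊢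
    nlinarith
  have hlevel : dotp (x + s • (-u.2, u.1) - x) u = 0 := by
    simp only [dotp, add_sub_cancel_left, Prod.smul_fst, Prod.smul_snd, smul_eq_mul]
    ring
  have hwidth : wedge u (x + s • (-u.2, u.1)) - wedge u x = s := by
    simp only [wedge, Prod.fst_add, Prod.snd_add, Prod.smul_fst, Prod.smul_snd, smul_eq_mul]
    linear_combination s * hu
  have harea : 0 < wedge (x - a) (x + s • (-u.2, u.1) - a) := by
    rw [wedge_sub_sub_of_dotp_eq hu (dotp_eq_of_dotp_sub_eq_zero hlevel), hwidth]
    exact mul_pos (sub_pos.2 hax) hs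
  exact ⟨x, _, ⟨ha, interior_subset hx, hxs, harea.le, hlevel, hamin _ (interior_subset hx)⟩,
    by rw [triArea]; positivity⟩

lemma not_anchored_of_dotp_eq {b c : Pt} (hint : (interior P).Nonempty)
    (hamin : ∀ x ∈ P, dotp a u ≤ dotp x u) (hflat : dotp b u = dotp a u)
    (hbc : dotp (c - b) u = 0) : ¬ Anchored P u a b c := by
  rintro ⟨⟨ha, -⟩, hmax⟩
  obtain ⟨b', c', hIN, hpos⟩ := exists_inscribedNormal_triArea_pos_s15 hu hint ha hamin
  have hzero : triArea a b c = 0 := by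
    rw [triArea, wedge_sub_sub_of_dotp_eq hu (dotp_eq_of_dotp_sub_eq_zero hbc), hflat]
    simp
  linarith [hmax _ _ _ hIN]

end Flat

/-- A candidate-anchored triangle `abc` (with `u` outer normal to side
`bc` and `-u` outer normal to `P` at `a`) is anchored to `u` if and only if
`Q₋₊(a,b,c) ≥ 0` and `Q₊₋(a,b,c) ≤ 0`, where `Q₋₊` (resp. `Q₊₋`) is the derivative of
the area along the family determined by the backward tangent at `b` and forward tangent
at `c` (resp. forward tangent at `b` and backward tangent at `c`). -/
theorem stmt_15 (S : Finset Pt) (hS : ¬ Collinear ℝ (S : Set Pt))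
    (P : Set Pt) (hP : P = convexHull ℝ (S : Set Pt))
    (u : Pt) (hu : u.1 ^ 2 + u.2 ^ 2 = 1)
    (a b c : Pt) (ha : a ∈ P) (hbP : b ∈ P) (hcP : c ∈ P)
    (hccw : 0 ≤ wedge (b - a) (c - a)) (hbcu : dotp (c - b) u = 0)
    (hamin : ∀ x ∈ P, dotp a u ≤ dotp x u)
    (vp vm wp wm : Pt)
    (hvp : FwdTangent P b vp) (hvm : BwdTangent P b vm)
    (hwp : FwdTangent P c wp) (hwm : BwdTangent P c wm)
    (hvpu : dotp vp u ≠ 0) (hvmu : dotp vm u ≠ 0)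
    (hwpu : dotp wp u ≠ 0) (hwmu : dotp wm u ≠ 0) (hbc : b ≠ c) :
    Anchored P u a b c ↔
      ((∀ q : ℝ, HasDerivAt (slideFam a b c vm wp u) q 0 → 0 ≤ q) ∧
       (∀ q : ℝ, HasDerivAt (slideFam a b c vp wm u) q 0 → q ≤ 0)) := by
  have hlevel : dotp c u = dotp b u := dotp_eq_of_dotp_sub_eq_zero hbcu
  have hL : 0 < elen (c - b) := elen_pos (sub_ne_zero.2 hbc.symm)
  have hclosed : IsClosed P := hP ▸ S.finite_toSet.isClosed_convexHull ℝ
  have hwidth : wedge u c - wedge u b ≠ 0 := fun h =>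
    hbc (eq_of_dotp_eq_of_wedge_eq_s15 hu hlevel.symm (by linarith))
  have hQmp := hasDerivAt_slideFam (a := a) hu hvmu hwpu hlevel
  have hQpm := hasDerivAt_slideFam (a := a) hu hvpu hwmu hlevel
  rcases (hamin b hbP).eq_or_lt with hflat | hΔ
  · have hint : (interior P).Nonempty :=
      hP ▸ interior_convexHull_nonempty_of_not_collinear (by simp) hS
    refine iff_of_false (not_anchored_of_dotp_eq hu hint hamin hflat.symm hbcu) ?_
    rintro ⟨hmp, hpm⟩
    have h₁ := nonneg_of_mul_nonneg_right (hmp _ hQmp) hL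
    have h₂ := nonpos_of_mul_nonpos_right (hpm _ hQpm) hL
    rw [hflat, sub_self, zero_mul, add_zero] at h₁ h₂
    exact hwidth (le_antisymm h₂ h₁)
  have hD : 0 < wedge u c - wedge u b := lt_of_le_of_ne
    (nonneg_of_mul_nonneg_right (wedge_sub_sub_of_dotp_eq hu hlevel ▸ hccw) (sub_pos.2 hΔ))
    hwidth.symm
  have hvp' := dotp_pos_of_wedge_nonneg hu hlevel hD hvpu (hvp.2 c hcP)
  have hvm' := dotp_pos_of_wedge_nonneg hu hlevel hD hvmu (hvm.2 c hcP)
  have hwp' := dotp_neg_of_wedge_nonneg hu hlevel.symm (by linarith) hwpu (hwp.2 b hbP)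
  have hwm' := dotp_neg_of_wedge_nonneg hu hlevel.symm (by linarith) hwmu (hwm.2 b hbP)
  have hpos : 0 < wedge (b - a) (c - a) :=
    wedge_sub_sub_of_dotp_eq hu hlevel ▸ mul_pos (sub_pos.2 hΔ) hD
  constructor
  · intro hA
    exact ⟨fun q hq => hq.nonneg_of_isLocalMaxOn_Iic
        (hA.isLocalMaxOn_Iic_slideFam hclosed hamin hpos hvm hwp hvm' hwp'),
      fun q hq => hq.nonpos_of_isLocalMaxOn_Ici
        (hA.isLocalMaxOn_Ici_slideFam hclosed hamin hpos hvp hwm hvp' hwm')⟩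
  · rintro ⟨hmp, hpm⟩
    exact anchored_of_tangent_bounds hu ha hbP hcP hccw hbcu hamin hΔ hD hvp.2 hvm.2 hwp.2
      hwm.2 hvp' hvm' hwp' hwm' (nonneg_of_mul_nonneg_right (hmp _ hQmp) hL)
      (nonpos_of_mul_nonpos_right (hpm _ hQpm) hL)
end
end
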